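/- arXiv:2207.10283 — 6 statements merged into one kernel-verified Lean document; each statement's English description precedes it below -/
import Mathlib

section
/- Let K ≥ 1, let z : {1,…,K} → ℝ be a logit vector and y ∈ {1,…,K}. Define the softmax cross-entropy loss ℓ_CE(z, y) = −z_y + log(Σ_{k=1}^K e^{z_k}) and the one-vs-the-rest loss ℓ_OVR(z, y) = −z_y + Σ_{k=1}^K log(1 + e^{z_k}). Then 0 ≤ ℓ_CE(z, y) ≤ ℓ_OVR(z, y) for every z and y. -/
lemma sum_le_prod_one_add {α : Type*} (s : Finset α) (f : α → ℝ)
    (hf : ∀ a ∈ s, 0 ≤ f a) : ∑ a ∈ s, f a ≤ ∏ a ∈ s, (1 + f a) := by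
  induction s using Finset.cons_induction with
  | empty => simp
  | cons a s ha ih =>
    rw [Finset.sum_cons, Finset.prod_cons]
    have h0 : 0 ≤ f a := hf a (Finset.mem_cons_self _ _)
    have hs : ∑ x ∈ s, f x ≤ ∏ x ∈ s, (1 + f x) :=
      ih fun x hx => hf x (Finset.mem_cons_of_mem hx)
    have hp1 : (1:ℝ) ≤ ∏ x ∈ s, (1 + f x) := by
      have h1 : ∏ _x ∈ s, (1:ℝ) ≤ ∏ x ∈ s, (1 + f x) := by
        apply Finset.prod_le_prod (by intros; norm_num)
        intro x hx
        linarith [hf x (Finset.mem_cons_of_mem hx)]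
      simpa using h1
    nlinarith

/-- Theorem 1 (inequality part): `0 ≤ ℓ_CE(z, y) ≤ ℓ_OVR(z, y)`. -/
theorem ce_le_ovr (K : ℕ) (hK : 1 ≤ K) (z : Fin K → ℝ) (y : Fin K) :
    0 ≤ -z y + Real.log (∑ k, Real.exp (z k)) ∧
    -z y + Real.log (∑ k, Real.exp (z k)) ≤
      -z y + ∑ k, Real.log (1 + Real.exp (z k)) := by
  have hpos : 0 < ∑ k, Real.exp (z k) :=
    Finset.sum_pos (fun k _ => Real.exp_pos _) ⟨y, Finset.mem_univ y⟩
  constructor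
  · have h1 : Real.exp (z y) ≤ ∑ k, Real.exp (z k) :=
      Finset.single_le_sum (fun k _ => (Real.exp_pos _).le) (Finset.mem_univ y)
    have := Real.log_le_log (Real.exp_pos _) h1
    rw [Real.log_exp] at this
    linarith
  · have h2 : ∑ k, Real.exp (z k) ≤ ∏ k, (1 + Real.exp (z k)) :=
      sum_le_prod_one_add _ _ fun k _ => (Real.exp_pos _).le
    have h3 : Real.log (∏ k, (1 + Real.exp (z k))) = ∑ k, Real.log (1 + Real.exp (z k)) :=
      Real.log_prod fun k _ => by positivity
    have := Real.log_le_log hpos h2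
    rw [h3] at this
    linarith
end

section
/- Let K ≥ 2, y ∈ {1,…,K}, and w > 0. Let u : [0, ∞) → ℝ be the function uniquely determined by the implicit equation u(t) + e^{u(t)} = w·t + 1 for all t ≥ 0. Then: (i) u(0) = 0; (ii) u is differentiable on [0,∞) with u'(t) = w/(1 + e^{u(t)}); and (iii) the curve z(t) ∈ ℝ^K defined by z_y(t) = u(t) and z_k(t) = −u(t) for k ≠ y satisfies the gradient flow dz_k/dt = −w·∂ℓ_OVR/∂z_k(z(t), y) for all k and all t ≥ 0, with z(0) = 0, where ℓ_OVR(z, y) = −z_y + Σ_k log(1 + e^{z_k}), so ∂ℓ_OVR/∂z_y = −1/(1+e^{z_y}) and ∂ℓ_OVR/∂z_k = e^{z_k}/(1+e^{z_k}) for k ≠ y. -/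
open Real Filter Set

private noncomputable def ovrF : ℝ → ℝ := fun x => x + Real.exp x

private lemma ovrF_strictMono : StrictMono ovrF :=
  strictMono_id.add Real.exp_strictMono

private lemma ovrF_continuous : Continuous ovrF :=
  continuous_id.add Real.continuous_exp

private lemma ovrF_surjective : Function.Surjective ovrF := by
  apply ovrF_continuous.surjective
  · exact tendsto_id.atTop_add_nonneg (fun x => (Real.exp_pos x).le)
  · refine tendsto_atBot_mono' atBot ?_
      (tendsto_atBot_add_const_right atBot 1 tendsto_id : Tendsto (fun x : ℝ => x + 1) atBot atBot)
    filter_upwards [eventually_le_atBot (0:ℝ)] with x hx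
    exact add_le_add_right (Real.exp_le_one_iff.mpr hx) x

private noncomputable def ovrE : ℝ ≃o ℝ :=
  StrictMono.orderIsoOfSurjective ovrF ovrF_strictMono ovrF_surjective

private lemma ovrE_apply (x : ℝ) : ovrE x = ovrF x := rfl

private lemma ovrE_symm_hasDerivAt (a : ℝ) :
    HasDerivAt ovrE.symm (1 + Real.exp (ovrE.symm a))⁻¹ a := by
  have hf : HasDerivAt ovrF (1 + Real.exp (ovrE.symm a)) (ovrE.symm a) := by
    exact (hasDerivAt_id (ovrE.symm a)).add (Real.hasDerivAt_exp (ovrE.symm a))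
  exact hf.of_local_left_inverse ovrE.symm.continuous.continuousAt
    (by positivity) (Eventually.of_forall fun y => ovrE.apply_symm_apply y)

/-- Lemma 1: the curve `z_y(t) = u(t)`, `z_k(t) = -u(t)` (`k ≠ y`), with
`u` determined by `u + e^u = w·t + 1`, solves the gradient flow of the
weighted OVR loss `w·ℓ_OVR` with initialization `z(0) = 0`. -/
theorem ovr_gradient_flow (K : ℕ) (hK : 2 ≤ K) (y : Fin K) (w : ℝ) (hw : 0 < w)
    (u : ℝ → ℝ) (hu : ∀ t ≥ (0:ℝ), u t + Real.exp (u t) = w * t + 1) :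
    u 0 = 0 ∧
    (∀ t ∈ Set.Ici (0:ℝ),
      HasDerivWithinAt u (w / (1 + Real.exp (u t))) (Set.Ici 0) t) ∧
    (∀ t ∈ Set.Ici (0:ℝ), ∀ k : Fin K,
      HasDerivWithinAt (fun s => if k = y then u s else -u s)
        (-(w * (if k = y then -1 / (1 + Real.exp (u t))
                else Real.exp (-u t) / (1 + Real.exp (-u t)))))
        (Set.Ici 0) t) ∧
    (∀ k : Fin K, (if k = y then u 0 else -u 0) = 0) := by
  have hrep : ∀ t ≥ (0:ℝ), u t = ovrE.symm (w * t + 1) := by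
    intro t ht
    apply ovrF_strictMono.injective
    rw [show ovrF (u t) = u t + Real.exp (u t) from rfl, hu t ht]
    exact (ovrE.apply_symm_apply _).symm
  have hu0 : u 0 = 0 := by
    apply ovrF_strictMono.injective
    show u 0 + Real.exp (u 0) = ovrF 0
    rw [hu 0 le_rfl]; simp [ovrF]
  have hderiv : ∀ t ∈ Set.Ici (0:ℝ),
      HasDerivWithinAt u (w / (1 + Real.exp (u t))) (Set.Ici 0) t := by
    intro t ht
    have haff : HasDerivAt (fun s : ℝ => w * s + 1) w t := by
      simpa using ((hasDerivAt_id t).const_mul w).add_const 1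
    have hcomp : HasDerivAt (fun s => ovrE.symm (w * s + 1))
        ((1 + Real.exp (ovrE.symm (w * t + 1)))⁻¹ * w) t :=
      (ovrE_symm_hasDerivAt (w * t + 1)).comp t haff
    have := hcomp.hasDerivWithinAt (s := Set.Ici (0:ℝ))
    have h2 : HasDerivWithinAt u ((1 + Real.exp (ovrE.symm (w * t + 1)))⁻¹ * w) (Set.Ici 0) t :=
      this.congr (fun s hs => hrep s hs) (hrep t ht)
    rw [← hrep t ht] at h2
    convert h2 using 1
    field_simp
  refine ⟨hu0, hderiv, ?_, ?_⟩
  · intro t ht k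
    by_cases hk : k = y
    · simp only [hk, if_pos rfl, ↓reduceIte]
      convert hderiv t ht using 1
      field_simp
    · simp only [if_neg hk]
      have : HasDerivWithinAt (fun s => -u s) (-(w / (1 + Real.exp (u t)))) (Set.Ici 0) t :=
        (hderiv t ht).neg
      convert this using 2
      have he : (0:ℝ) < Real.exp (u t) := Real.exp_pos _
      have hpos : (0:ℝ) < 1 + Real.exp (u t) := by positivity
      have key : Real.exp (-u t) / (1 + Real.exp (-u t)) = 1 / (1 + Real.exp (u t)) := by
        rw [Real.exp_neg, div_eq_div_iff (by positivity) hpos.ne']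
        field_simp
        ring
      rw [key, mul_one_div]
  · intro k; by_cases hk : k = y <;> simp [hk, hu0]
end

section
/- Let K ≥ 2, y ∈ {1,…,K}, and w > 0. Let v : [0, ∞) → ℝ be the function uniquely determined by the implicit equation v(t) + (1/K)·e^{K·v(t)/(K−1)} = w·t + 1/K for all t ≥ 0. Then: (i) v(0) = 0; (ii) v is differentiable on [0,∞) with v'(t) = w·(K−1)/(K−1 + e^{K·v(t)/(K−1)}); and (iii) the curve z(t) ∈ ℝ^K defined by z_y(t) = v(t) and z_k(t) = −v(t)/(K−1) for k ≠ y satisfies the gradient flow dz_k/dt = −w·∂ℓ_CE/∂z_k(z(t), y) for all k and all t ≥ 0, with z(0) = 0, where ℓ_CE(z, y) = −z_y + log(Σ_k e^{z_k}), so ∂ℓ_CE/∂z_k = −δ_{k y} + e^{z_k}/Σ_m e^{z_m}. -/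
/-- Lemma 2: the curve `z_y(t) = v(t)`, `z_k(t) = -v(t)/(K-1)` (`k ≠ y`), with
`v` determined by `v + (1/K)·e^{K·v/(K-1)} = w·t + 1/K`, solves the gradient
flow of the weighted cross-entropy loss `w·ℓ_CE` with initialization
`z(0) = 0`. -/
theorem ce_gradient_flow (K : ℕ) (hK : 2 ≤ K) (y : Fin K) (w : ℝ) (hw : 0 < w)
    (v : ℝ → ℝ)
    (hv : ∀ t ≥ (0:ℝ),
      v t + (1 / (K:ℝ)) * Real.exp ((K:ℝ) * v t / ((K:ℝ) - 1)) = w * t + 1 / (K:ℝ)) :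
    v 0 = 0 ∧
    (∀ t ∈ Set.Ici (0:ℝ),
      HasDerivWithinAt v
        (w * ((K:ℝ) - 1) / (((K:ℝ) - 1) + Real.exp ((K:ℝ) * v t / ((K:ℝ) - 1))))
        (Set.Ici 0) t) ∧
    (∀ t ∈ Set.Ici (0:ℝ), ∀ k : Fin K,
      HasDerivWithinAt (fun s => if k = y then v s else -v s / ((K:ℝ) - 1))
        (-(w * ((if k = y then -1 else 0) +
            Real.exp (if k = y then v t else -v t / ((K:ℝ) - 1)) /
              ∑ m : Fin K, Real.exp (if m = y then v t else -v t / ((K:ℝ) - 1)))))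
        (Set.Ici 0) t) ∧
    (∀ k : Fin K, (if k = y then v 0 else -v 0 / ((K:ℝ) - 1)) = 0) := by
  have hK2 : (2:ℝ) ≤ (K:ℝ) := by exact_mod_cast hK
  have hKm : (0:ℝ) < (K:ℝ) - 1 := by linarith
  have hK0 : (0:ℝ) < (K:ℝ) := by linarith
  set Kr : ℝ := (K:ℝ) with hKr
  -- the implicit function F
  set F : ℝ → ℝ := fun x => x + (1 / Kr) * Real.exp (Kr * x / (Kr - 1)) with hF
  have hFmono : StrictMono F := by
    intro a b hab
    have h1 : Real.exp (Kr * a / (Kr - 1)) < Real.exp (Kr * b / (Kr - 1)) := by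
      have : Kr * a / (Kr - 1) < Kr * b / (Kr - 1) := by
        apply div_lt_div_of_pos_right _ hKm
        nlinarith
      exact Real.exp_lt_exp.mpr this
    have : 0 < 1 / Kr := by positivity
    simp only [hF]
    nlinarith
  -- v 0 = 0
  have hv0 : v 0 = 0 := by
    have h0 := hv 0 le_rfl
    have hF0 : F (v 0) = F 0 := by
      simp only [hF]
      rw [h0]
      simp
    exact hFmono.injective hF0
  -- derivative of F
  have hF' : ∀ x : ℝ, HasDerivAt F (1 + Real.exp (Kr * x / (Kr - 1)) / (Kr - 1)) x := by
    intro x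
    have h1 : HasDerivAt (fun x : ℝ => Kr * x / (Kr - 1)) (Kr / (Kr - 1)) x := by
      simpa using ((hasDerivAt_id x).const_mul Kr).div_const (Kr - 1)
    have h2 : HasDerivAt (fun x : ℝ => Real.exp (Kr * x / (Kr - 1)))
        (Real.exp (Kr * x / (Kr - 1)) * (Kr / (Kr - 1))) x :=
      (Real.hasDerivAt_exp _).comp x h1
    have h3 := (hasDerivAt_id x).add (h2.const_mul (1 / Kr))
    refine h3.congr_deriv ?_
    field_simp
  have hF'pos : ∀ x : ℝ, 0 < 1 + Real.exp (Kr * x / (Kr - 1)) / (Kr - 1) := by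
    intro x; positivity
  -- F is surjective
  have hFcont : Continuous F := by
    simp only [hF]
    fun_prop
  have hFtop : Filter.Tendsto F Filter.atTop Filter.atTop := by
    apply Filter.tendsto_atTop_mono (fun x => ?_) Filter.tendsto_id
    have : 0 < (1 / Kr) * Real.exp (Kr * x / (Kr - 1)) := by positivity
    simp only [hF, id]
    linarith
  have hFbot : Filter.Tendsto F Filter.atBot Filter.atBot := by
    apply Filter.tendsto_atBot_mono' _ ?_ (Filter.tendsto_atBot_add_const_right _ (1/Kr)
      Filter.tendsto_id)
    filter_upwards [Filter.eventually_le_atBot (0:ℝ)] with x hx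
    have h1 : Real.exp (Kr * x / (Kr - 1)) ≤ 1 := by
      apply Real.exp_le_one_iff.mpr
      apply div_nonpos_of_nonpos_of_nonneg (by nlinarith) (by linarith)
    have : 0 < 1 / Kr := by positivity
    simp only [hF, id]
    nlinarith
  have hFsurj : Function.Surjective F := hFcont.surjective hFtop hFbot
  -- inverse g
  let e : ℝ ≃o ℝ := StrictMono.orderIsoOfSurjective F hFmono hFsurj
  set g : ℝ → ℝ := ⇑e.symm with hg
  have hgF : ∀ x, g (F x) = x := fun x => e.symm_apply_apply x
  have hFg : ∀ a, F (g a) = a := fun a => e.apply_symm_apply a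
  have hgcont : Continuous g := (OrderIso.toHomeomorph e.symm).continuous
  have hgderiv : ∀ a : ℝ,
      HasDerivAt g (1 + Real.exp (Kr * g a / (Kr - 1)) / (Kr - 1))⁻¹ a := by
    intro a
    exact HasDerivAt.of_local_left_inverse hgcont.continuousAt (hF' (g a))
      (ne_of_gt (hF'pos _)) (Filter.Eventually.of_forall hFg)
  -- v t = g (w t + 1/K) on Ici 0
  have hveq : ∀ t ∈ Set.Ici (0:ℝ), v t = g (w * t + 1 / Kr) := by
    intro t ht
    have := hv t ht
    have hFt : F (v t) = w * t + 1 / Kr := this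
    rw [← hFt, hgF]
  -- part (ii)
  have part2 : ∀ t ∈ Set.Ici (0:ℝ),
      HasDerivWithinAt v
        (w * (Kr - 1) / ((Kr - 1) + Real.exp (Kr * v t / (Kr - 1))))
        (Set.Ici 0) t := by
    intro t ht
    have h1 : HasDerivAt (fun s : ℝ => w * s + 1 / Kr) w t := by
      simpa using ((hasDerivAt_id t).const_mul w).add_const (1 / Kr)
    have h2 : HasDerivAt (fun s => g (w * s + 1 / Kr))
        ((1 + Real.exp (Kr * g (w * t + 1 / Kr) / (Kr - 1)) / (Kr - 1))⁻¹ * w) t :=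
      (hgderiv (w * t + 1 / Kr)).comp t h1
    have h3 : HasDerivWithinAt (fun s => g (w * s + 1 / Kr))
        ((1 + Real.exp (Kr * g (w * t + 1 / Kr) / (Kr - 1)) / (Kr - 1))⁻¹ * w)
        (Set.Ici 0) t := h2.hasDerivWithinAt
    have h4 := h3.congr (fun s hs => hveq s hs) (hveq t ht)
    refine h4.congr_deriv ?_
    rw [← hveq t ht]
    have hpos : 0 < (Kr - 1) + Real.exp (Kr * v t / (Kr - 1)) := by positivity
    field_simp
  refine ⟨hv0, part2, ?_, ?_⟩
  · -- part (iii) derivatives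
    intro t ht k
    have hvd := part2 t ht
    set u : ℝ := Real.exp (Kr * v t / (Kr - 1)) with hu
    have hupos : 0 < u := Real.exp_pos _
    have hE' : 0 < Real.exp (-v t / (Kr - 1)) := Real.exp_pos _
    have hEeq : Real.exp (v t) = u * Real.exp (-v t / (Kr - 1)) := by
      rw [hu, ← Real.exp_add]
      congr 1
      field_simp
      ring
    have hsum : ∑ m : Fin K, Real.exp (if m = y then v t else -v t / (Kr - 1))
        = (u + (Kr - 1)) * Real.exp (-v t / (Kr - 1)) := by
      have : ∀ m : Fin K, Real.exp (if m = y then v t else -v t / (Kr - 1))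
          = Real.exp (-v t / (Kr - 1))
            + (if m = y then Real.exp (v t) - Real.exp (-v t / (Kr - 1)) else 0) := by
        intro m; by_cases h : m = y <;> simp [h]
      rw [Finset.sum_congr rfl (fun m _ => this m), Finset.sum_add_distrib,
        Finset.sum_ite_eq' Finset.univ y]
      simp [hEeq, hKr]
      ring
    by_cases hk : k = y
    · subst hk
      simp only [if_pos rfl]
      refine hvd.congr_deriv ?_
      simp only [if_true]
      rw [hsum, hEeq]
      have h1 : u + (Kr - 1) ≠ 0 := by positivity
      field_simp
      ring
    · simp only [if_neg hk]
      have h := (hvd.neg).div_const (Kr - 1)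
      refine h.congr_deriv ?_
      rw [hsum]
      have h1 : u + (Kr - 1) ≠ 0 := by positivity
      have h2 : (Kr - 1) ≠ 0 := ne_of_gt hKm
      field_simp
      ring
  · intro k
    by_cases hk : k = y <;> simp [hk, hv0]
end

section
/- Let w > 0 and let u : [0, ∞) → ℝ be determined by u(t) + e^{u(t)} = w·t + 1. Then u(t) − log(w·t + 1) → 0 as t → ∞. Consequently the logit margin loss of the OVR gradient-flow solution, ℓ_LM(z^{OVR}(t)) = −2·u(t), satisfies ℓ_LM(z^{OVR}(t)) + log((w·t + 1)^2) → 0 as t → ∞. -/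
open Filter Real

/-- Large-`t` asymptotics of the OVR logit margin loss (Theorem 2):
`ℓ_LM(z^{OVR}(t)) = -2u(t) ≈ -log((wt+1)²)`. -/
theorem ovr_margin_asymptotics (w : ℝ) (hw : 0 < w) (u : ℝ → ℝ)
    (hu : ∀ t ≥ (0:ℝ), u t + Real.exp (u t) = w * t + 1) :
    Filter.Tendsto (fun t => u t - Real.log (w * t + 1)) Filter.atTop (nhds 0) ∧
    Filter.Tendsto (fun t => -2 * u t + Real.log ((w * t + 1) ^ 2))
      Filter.atTop (nhds 0) := by
  have hs : Filter.Tendsto (fun t => w * t + 1) Filter.atTop Filter.atTop := by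
    apply Filter.tendsto_atTop_add_const_right
    exact (Filter.tendsto_id.const_mul_atTop hw)
  have hlog : Filter.Tendsto (fun t => Real.log (w * t + 1) / (w * t + 1))
      Filter.atTop (nhds 0) :=
    (Real.isLittleO_log_id_atTop.tendsto_div_nhds_zero).comp hs
  -- basic facts for t ≥ 0
  have key : ∀ t ≥ (0:ℝ),
      Real.log (w * t + 1 - Real.log (w * t + 1)) - Real.log (w * t + 1)
        ≤ u t - Real.log (w * t + 1) ∧ u t - Real.log (w * t + 1) ≤ 0 := by
    intro t ht
    set s := w * t + 1 with hsd
    have hs1 : (1:ℝ) ≤ s := by nlinarith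
    have hs0 : 0 < s := by linarith
    have heq : u t + Real.exp (u t) = s := hu t ht
    have hls : 0 ≤ Real.log s := Real.log_nonneg hs1
    have hub : u t ≤ Real.log s := by
      by_contra h
      push_neg at h
      have h2 : Real.exp (Real.log s) < Real.exp (u t) := Real.exp_lt_exp.2 h
      rw [Real.exp_log hs0] at h2
      linarith
    have hpos : 0 < s - Real.log s := by
      have := Real.log_le_sub_one_of_pos hs0
      linarith
    have hlb : Real.log (s - Real.log s) ≤ u t := by
      have h3 : s - Real.log s ≤ Real.exp (u t) := by linarith
      have := Real.log_le_log hpos h3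
      rwa [Real.log_exp] at this
    exact ⟨by linarith, by linarith⟩
  have h1 : Filter.Tendsto (fun t => u t - Real.log (w * t + 1)) Filter.atTop (nhds 0) := by
    have hlow : Filter.Tendsto
        (fun t => Real.log (w * t + 1 - Real.log (w * t + 1)) - Real.log (w * t + 1))
        Filter.atTop (nhds 0) := by
      have h2 : Filter.Tendsto (fun t => Real.log (1 - Real.log (w * t + 1) / (w * t + 1)))
          Filter.atTop (nhds 0) := by
        have hb : Filter.Tendsto (fun t => 1 - Real.log (w * t + 1) / (w * t + 1))
            Filter.atTop (nhds (1 - 0)) := tendsto_const_nhds.sub hlog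
        have := hb.log (by norm_num)
        simpa using this
      apply h2.congr'
      filter_upwards [Filter.eventually_ge_atTop (0:ℝ)] with t ht
      set s := w * t + 1 with hsd
      have hs1 : (1:ℝ) ≤ s := by nlinarith
      have hs0 : 0 < s := by linarith
      have hpos : 0 < s - Real.log s := by
        have := Real.log_le_sub_one_of_pos hs0
        linarith
      rw [show 1 - Real.log s / s = (s - Real.log s) / s by field_simp,
        Real.log_div (ne_of_gt hpos) (ne_of_gt hs0)]
    apply tendsto_of_tendsto_of_tendsto_of_le_of_le' hlow tendsto_const_nhds
    · filter_upwards [Filter.eventually_ge_atTop (0:ℝ)] with t ht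
      exact (key t ht).1
    · filter_upwards [Filter.eventually_ge_atTop (0:ℝ)] with t ht
      exact (key t ht).2
  refine ⟨h1, ?_⟩
  have h2 := h1.const_mul (-2 : ℝ)
  rw [mul_zero] at h2
  apply h2.congr
  intro t
  rw [Real.log_pow]
  push_cast
  ring
end

section
/- Let K ≥ 2, w > 0, and let v : [0, ∞) → ℝ be determined by v(t) + (1/K)·e^{K·v(t)/(K−1)} = w·t + 1/K. Then K·v(t)/(K−1) − log(K·w·t + 1 − (K−1)·log(K−1)) → 0 as t → ∞. Consequently the logit margin loss of the cross-entropy gradient-flow solution, ℓ_LM(z^{CE}(t)) = −K·v(t)/(K−1), satisfies ℓ_LM(z^{CE}(t)) + log(K·w·t + 1 − (K−1)·log(K−1)) → 0 as t → ∞. -/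
/-- Large-`t` asymptotics of the cross-entropy logit margin loss (Theorem 2):
`ℓ_LM(z^{CE}(t)) = -Kv(t)/(K-1) ≈ -log(Kwt + 1 - (K-1)log(K-1))`. -/
theorem ce_margin_asymptotics (K : ℕ) (hK : 2 ≤ K) (w : ℝ) (hw : 0 < w)
    (v : ℝ → ℝ)
    (hv : ∀ t ≥ (0:ℝ),
      v t + (1 / (K:ℝ)) * Real.exp ((K:ℝ) * v t / ((K:ℝ) - 1)) = w * t + 1 / (K:ℝ)) :
    Filter.Tendsto
      (fun t => (K:ℝ) * v t / ((K:ℝ) - 1) -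
        Real.log ((K:ℝ) * w * t + 1 - ((K:ℝ) - 1) * Real.log ((K:ℝ) - 1)))
      Filter.atTop (nhds 0) ∧
    Filter.Tendsto
      (fun t => -((K:ℝ) * v t / ((K:ℝ) - 1)) +
        Real.log ((K:ℝ) * w * t + 1 - ((K:ℝ) - 1) * Real.log ((K:ℝ) - 1)))
      Filter.atTop (nhds 0) := by
  set c : ℝ := (K : ℝ) with hc_def
  have hc : (2:ℝ) ≤ c := by
    have : (2:ℝ) ≤ (K:ℝ) := by exact_mod_cast hK
    simpa [hc_def] using this
  have hc1 : (1:ℝ) ≤ c - 1 := by linarith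
  have hc0 : (0:ℝ) < c - 1 := by linarith
  have hcpos : (0:ℝ) < c := by linarith
  have hcne : c ≠ 0 := ne_of_gt hcpos
  have hc0ne : c - 1 ≠ 0 := ne_of_gt hc0
  have hL : (0:ℝ) ≤ Real.log (c - 1) := Real.log_nonneg hc1
  set D : ℝ := (c - 1) * Real.log (c - 1) with hD_def
  have hD0 : 0 ≤ D := mul_nonneg (le_of_lt hc0) hL
  set u : ℝ → ℝ := fun t => c * v t / (c - 1) with hu_def
  set S : ℝ → ℝ := fun t => c * w * t + 1 with hS_def
  set A : ℝ → ℝ := fun t => c * w * t + 1 - D with hA_def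
  -- key equation
  have key : ∀ t ≥ (0:ℝ), Real.exp (u t) + (c - 1) * u t = S t := by
    intro t ht
    have h := hv t ht
    have h1 : (c - 1) * u t = c * v t := by
      simp only [hu_def]
      field_simp
    have h2 : c * (v t + (1/c) * Real.exp (u t)) = c * (w * t + 1/c) := by
      simp only [hu_def] at h ⊢
      rw [h]
    have h3 : c * v t + Real.exp (u t) = c * w * t + 1 := by
      have e1 : c * (1/c) = 1 := by field_simp
      linear_combination h2 - (Real.exp (u t) - 1) * e1
    simp only [hS_def]
    linarith [h1, h3]
  have hSpos : ∀ t ≥ (0:ℝ), 0 < S t := by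
    intro t ht
    have : 0 ≤ c * w * t := by positivity
    simp only [hS_def]; linarith
  -- bounds on u
  have hu0 : ∀ t ≥ (0:ℝ), 0 ≤ u t := by
    intro t ht
    by_contra h
    push_neg at h
    have he : Real.exp (u t) < 1 := Real.exp_lt_one_iff.mpr h
    have hm : (c - 1) * u t < 0 := mul_neg_of_pos_of_neg hc0 h
    have hk := key t ht
    have : 0 ≤ c * w * t := by positivity
    simp only [hS_def] at hk
    linarith
  have huU : ∀ t ≥ (0:ℝ), u t ≤ Real.log (S t) := by
    intro t ht
    have hk := key t ht
    have h1 : Real.exp (u t) ≤ S t := by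
      have := mul_nonneg (le_of_lt hc0) (hu0 t ht)
      linarith
    exact (Real.le_log_iff_exp_le (hSpos t ht)).mpr h1
  -- S and A tend to atTop
  have hcw : 0 < c * w := mul_pos hcpos hw
  have hlin : Filter.Tendsto (fun t : ℝ => c * w * t) Filter.atTop Filter.atTop := by
    simpa [mul_assoc] using Filter.Tendsto.const_mul_atTop hcw Filter.tendsto_id
  have hS_top : Filter.Tendsto S Filter.atTop Filter.atTop :=
    Filter.tendsto_atTop_add_const_right _ 1 hlin
  have hA_top : Filter.Tendsto A Filter.atTop Filter.atTop := by
    have := Filter.tendsto_atTop_add_const_right Filter.atTop (1 - D) hlin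
    refine this.congr fun t => ?_
    simp only [hA_def]; ring
  -- eventually A ≥ 1 and t ≥ 0
  have hev : ∀ᶠ t in Filter.atTop, 1 ≤ A t ∧ 0 ≤ t :=
    (hA_top.eventually_ge_atTop 1).and (Filter.eventually_ge_atTop 0)
  -- log S / A → 0
  have hlogSA : Filter.Tendsto (fun t => Real.log (S t) / A t) Filter.atTop (nhds 0) := by
    have h0 := (Real.tendsto_pow_log_div_mul_add_atTop 1 (-D) 1 one_ne_zero).comp hS_top
    refine h0.congr fun t => ?_
    simp only [Function.comp, pow_one, one_mul, hA_def, hS_def, sub_eq_add_neg]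
  -- constants / A → 0
  have hconstA : ∀ (e : ℝ), Filter.Tendsto (fun t => e / A t) Filter.atTop (nhds 0) :=
    fun e => Filter.Tendsto.div_atTop tendsto_const_nhds hA_top
  -- ratio N/A → 1, where N t = S t - (c-1) * u t
  set N : ℝ → ℝ := fun t => S t - (c - 1) * u t with hN_def
  have hratio : Filter.Tendsto (fun t => N t / A t) Filter.atTop (nhds 1) := by
    have hhi : Filter.Tendsto (fun t => 1 + D / A t) Filter.atTop (nhds 1) := by
      have := (hconstA D).const_add 1
      simpa using this
    have hlo : Filter.Tendsto (fun t => 1 + D / A t - (c - 1) * (Real.log (S t) / A t))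
        Filter.atTop (nhds 1) := by
      have h2 := hlogSA.const_mul (c - 1)
      have := hhi.sub h2
      simpa using this
    refine tendsto_of_tendsto_of_tendsto_of_le_of_le' hlo hhi ?_ ?_
    · filter_upwards [hev] with t ht
      obtain ⟨hA1, ht0⟩ := ht
      have hApos : 0 < A t := by linarith
      have h1 : 1 + D / A t - (c - 1) * (Real.log (S t) / A t)
          = (S t - (c - 1) * Real.log (S t)) / A t := by
        have hAne : A t ≠ 0 := ne_of_gt hApos
        field_simp
        simp only [hA_def, hS_def]
        ring
      rw [h1]
      have hnum : S t - (c - 1) * Real.log (S t) ≤ N t := by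
        have := mul_le_mul_of_nonneg_left (huU t ht0) (le_of_lt hc0)
        simp only [hN_def]
        linarith
      exact (div_le_div_iff_of_pos_right hApos).mpr hnum
    · filter_upwards [hev] with t ht
      obtain ⟨hA1, ht0⟩ := ht
      have hApos : 0 < A t := by linarith
      have h1 : 1 + D / A t = S t / A t := by
        have hAne : A t ≠ 0 := ne_of_gt hApos
        field_simp
        simp only [hA_def, hS_def]
        ring
      rw [h1]
      have hnum : N t ≤ S t := by
        have := mul_nonneg (le_of_lt hc0) (hu0 t ht0)
        simp only [hN_def]
        linarith
      exact (div_le_div_iff_of_pos_right hApos).mpr hnum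
  -- log of ratio → 0
  have hlog : Filter.Tendsto (fun t => Real.log (N t / A t)) Filter.atTop (nhds 0) := by
    have hcont : Filter.Tendsto Real.log (nhds 1) (nhds 0) := by
      simpa using (Real.continuousAt_log one_ne_zero).tendsto
    exact hcont.comp hratio
  -- first part
  have hfirst : Filter.Tendsto (fun t => u t - Real.log (A t)) Filter.atTop (nhds 0) := by
    refine hlog.congr' ?_
    filter_upwards [hev] with t ht
    obtain ⟨hA1, ht0⟩ := ht
    have hApos : 0 < A t := by linarith
    have hNexp : N t = Real.exp (u t) := by
      have := key t ht0
      simp only [hN_def]; linarith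
    have hNpos : 0 < N t := hNexp ▸ Real.exp_pos _
    rw [Real.log_div (ne_of_gt hNpos) (ne_of_gt hApos), hNexp, Real.log_exp]
  constructor
  · exact hfirst
  · have := hfirst.neg
    simp only [neg_zero] at this
    refine this.congr fun t => by ring
end

section
/- Let K ≥ 2 and w_1, w_2 > 0. Let u : [0,∞) → ℝ be determined by u(t) + e^{u(t)} = w_1·t + 1 and v : [0,∞) → ℝ by v(t) + (1/K)·e^{K·v(t)/(K−1)} = w_2·t + 1/K. Then the ratio of the logit margin losses of the OVR and cross-entropy gradient flows satisfies lim_{t→∞} (−2·u(t)) / (−K·v(t)/(K−1)) = 2; i.e., lim_{t→∞} ℓ_LM(z^{OVR}(t)) / ℓ_LM(z^{CE}(t)) = 2, for any fixed weights w_1, w_2 and number of classes K. -/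
open Filter Real

private lemma log_div_self_tendsto : Tendsto (fun x : ℝ => Real.log x / x) atTop (nhds 0) :=
  Real.isLittleO_log_id_atTop.tendsto_div_nhds_zero

private lemma key (c α : ℝ) (hc : 0 < c) (hα : 0 < α) (f : ℝ → ℝ)
    (hf : ∀ t ≥ (0:ℝ), c * f t + Real.exp (f t) = α * t + 1) :
    Tendsto (fun t => f t - Real.log (α * t + 1)) atTop (nhds 0) ∧
      Tendsto f atTop atTop := by
  set s : ℝ → ℝ := fun t => α * t + 1 with hs
  have hstop : Tendsto s atTop atTop :=
    tendsto_atTop_add_const_right _ 1 (tendsto_id.const_mul_atTop hα)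
  have htop : Tendsto f atTop atTop := by
    rw [tendsto_atTop]
    intro M
    filter_upwards [hstop.eventually_gt_atTop (c * M + Real.exp M),
      eventually_ge_atTop (0:ℝ)] with t hst ht
    by_contra h
    push_neg at h
    have : c * f t + Real.exp (f t) < c * M + Real.exp M :=
      add_lt_add (by nlinarith) (Real.exp_lt_exp.2 h)
    rw [hf t ht] at this
    simp only [hs] at hst
    linarith
  have hG : Tendsto (fun x : ℝ => x - c * Real.log x) atTop atTop := by
    have h1 : Tendsto (fun x : ℝ => x * (1 - c * (Real.log x / x))) atTop atTop := by
      apply tendsto_id.atTop_mul_pos (C := 1) one_pos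
      have h2 := log_div_self_tendsto.const_mul c
      have h3 := (tendsto_const_nhds (x := (1:ℝ)) (f := atTop)).sub h2
      simpa using h3
    refine h1.congr' ?_
    filter_upwards [eventually_gt_atTop (0:ℝ)] with x hx
    field_simp
  have hsctop : Tendsto (fun t => s t - c * Real.log (s t)) atTop atTop := hG.comp hstop
  have hmain : Tendsto (fun t => f t - Real.log (s t)) atTop (nhds 0) := by
    have hlow : Tendsto (fun t => Real.log (s t - c * Real.log (s t)) - Real.log (s t))
        atTop (nhds 0) := by
      have hinner : Tendsto (fun t => 1 - c * (Real.log (s t) / s t)) atTop (nhds 1) := by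
        have h2 := (log_div_self_tendsto.comp hstop).const_mul c
        have h3 := (tendsto_const_nhds (x := (1:ℝ)) (f := atTop)).sub h2
        simpa [Function.comp] using h3
      have hlog : Tendsto (fun t => Real.log (1 - c * (Real.log (s t) / s t)))
          atTop (nhds 0) := by
        have := (Real.continuousAt_log one_ne_zero).tendsto.comp hinner
        simpa [Function.comp_def, Real.log_one] using this
      refine hlog.congr' ?_
      filter_upwards [hstop.eventually_gt_atTop 0, hsctop.eventually_gt_atTop 0] with t hs0 hsc0
      rw [← Real.log_div (ne_of_gt hsc0) (ne_of_gt hs0)]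
      congr 1
      field_simp
    refine tendsto_of_tendsto_of_tendsto_of_le_of_le' hlow tendsto_const_nhds ?_ ?_
    · filter_upwards [hstop.eventually_gt_atTop 0, hsctop.eventually_gt_atTop 0,
        htop.eventually_ge_atTop 0, eventually_ge_atTop (0:ℝ)] with t hs0 hsc0 hf0 ht
      have heq : Real.exp (f t) = s t - c * f t := by
        have := hf t ht; simp only [hs]; linarith
      have hfle : f t ≤ Real.log (s t) := by
        rw [Real.le_log_iff_exp_le hs0, heq]
        nlinarith
      have hge : s t - c * Real.log (s t) ≤ Real.exp (f t) := by
        rw [heq]; nlinarith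
      have : Real.log (s t - c * Real.log (s t)) ≤ f t :=
        (Real.log_le_iff_le_exp hsc0).2 hge
      linarith
    · filter_upwards [hstop.eventually_gt_atTop 0, htop.eventually_ge_atTop 0,
        eventually_ge_atTop (0:ℝ)] with t hs0 hf0 ht
      have heq : Real.exp (f t) = s t - c * f t := by
        have := hf t ht; simp only [hs]; linarith
      have hfle : f t ≤ Real.log (s t) := by
        rw [Real.le_log_iff_exp_le hs0, heq]
        nlinarith
      linarith
  exact ⟨hmain, htop⟩

/-- Theorem 2 (limit of the ratio of logit margin losses):
`lim_{t→∞} ℓ_LM(z^{OVR}(t)) / ℓ_LM(z^{CE}(t)) = 2` for any fixed weights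
`w₁, w₂ > 0` and number of classes `K`. -/
theorem margin_ratio_limit (K : ℕ) (hK : 2 ≤ K)
    (w₁ w₂ : ℝ) (hw₁ : 0 < w₁) (hw₂ : 0 < w₂)
    (u v : ℝ → ℝ)
    (hu : ∀ t ≥ (0:ℝ), u t + Real.exp (u t) = w₁ * t + 1)
    (hv : ∀ t ≥ (0:ℝ),
      v t + (1 / (K:ℝ)) * Real.exp ((K:ℝ) * v t / ((K:ℝ) - 1)) = w₂ * t + 1 / (K:ℝ)) :
    Filter.Tendsto
      (fun t => (-2 * u t) / (-((K:ℝ) * v t) / ((K:ℝ) - 1)))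
      Filter.atTop (nhds 2) := by
  have hK2 : (2:ℝ) ≤ (K:ℝ) := by exact_mod_cast hK
  have hKpos : (0:ℝ) < (K:ℝ) := by linarith
  have hK1 : (0:ℝ) < (K:ℝ) - 1 := by linarith
  set b : ℝ → ℝ := fun t => (K:ℝ) * v t / ((K:ℝ) - 1) with hbdef
  have hb : ∀ t ≥ (0:ℝ), ((K:ℝ) - 1) * b t + Real.exp (b t) = ((K:ℝ) * w₂) * t + 1 := by
    intro t ht
    have h := hv t ht
    have hb1 : ((K:ℝ) - 1) * b t = (K:ℝ) * v t := by
      rw [hbdef]; field_simp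
    have hb2 : b t = (K:ℝ) * v t / ((K:ℝ) - 1) := rfl
    rw [hb1, hb2]
    have h' : (K:ℝ) * (v t + (1 / (K:ℝ)) * Real.exp ((K:ℝ) * v t / ((K:ℝ) - 1)))
        = (K:ℝ) * (w₂ * t + 1 / (K:ℝ)) := by rw [h]
    field_simp at h'
    linarith
  have hu' : ∀ t ≥ (0:ℝ), 1 * u t + Real.exp (u t) = w₁ * t + 1 := by
    intro t ht; rw [one_mul]; exact hu t ht
  obtain ⟨hu0, hutop⟩ := key 1 w₁ one_pos hw₁ u hu'
  obtain ⟨hb0, hbtop⟩ := key ((K:ℝ) - 1) ((K:ℝ) * w₂) hK1 (by positivity) b hb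
  -- difference of logs tends to a constant
  have hq : Tendsto (fun t : ℝ => (w₁ * t + 1) / ((K:ℝ) * w₂ * t + 1)) atTop
      (nhds (w₁ / ((K:ℝ) * w₂))) := by
    have hnum : Tendsto (fun t : ℝ => w₁ + 1 / t) atTop (nhds w₁) := by
      have := (tendsto_const_nhds (x := w₁) (f := atTop)).add tendsto_inv_atTop_zero
      simpa [one_div] using this
    have hden : Tendsto (fun t : ℝ => (K:ℝ) * w₂ + 1 / t) atTop (nhds ((K:ℝ) * w₂)) := by
      have := (tendsto_const_nhds (x := (K:ℝ) * w₂) (f := atTop)).add tendsto_inv_atTop_zero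
      simpa [one_div] using this
    have hdiv := hnum.div hden (by positivity)
    refine hdiv.congr' ?_
    filter_upwards [eventually_gt_atTop (0:ℝ)] with t ht
    simp only [Pi.div_apply]
    rw [div_eq_div_iff (by positivity) (by positivity)]
    field_simp
  have hdiff : Tendsto
      (fun t => Real.log (w₁ * t + 1) - Real.log ((K:ℝ) * w₂ * t + 1)) atTop
      (nhds (Real.log (w₁ / ((K:ℝ) * w₂)))) := by
    have hlog := (Real.continuousAt_log (by positivity)).tendsto.comp hq
    refine Tendsto.congr' ?_ hlog
    filter_upwards [eventually_gt_atTop (0:ℝ)] with t ht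
    simp only [Function.comp]
    rw [Real.log_div (by positivity) (by positivity)]
  have hub : Tendsto (fun t => u t - b t) atTop (nhds (Real.log (w₁ / ((K:ℝ) * w₂)))) := by
    have h := (hu0.sub hb0).add hdiff
    rw [sub_zero, zero_add] at h
    refine h.congr ?_
    intro t; ring
  have hr0 : Tendsto (fun t => (u t - b t) / b t) atTop (nhds 0) := hub.div_atTop hbtop
  have hratio : Tendsto (fun t => u t / b t) atTop (nhds 1) := by
    have h := (tendsto_const_nhds (x := (1:ℝ)) (f := atTop)).add hr0
    rw [add_zero] at h
    refine h.congr' ?_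
    filter_upwards [hbtop.eventually_gt_atTop 0] with t hbt
    rw [sub_div, div_self (ne_of_gt hbt)]
    ring
  have hfinal := hratio.const_mul (2:ℝ)
  rw [mul_one] at hfinal
  refine hfinal.congr' ?_
  filter_upwards with t
  have hbeq : -((K:ℝ) * v t) / ((K:ℝ) - 1) = -(b t) := by
    rw [hbdef]; ring
  rw [hbeq]
  rw [show (-2 * u t) = -(2 * u t) by ring, neg_div_neg_eq, mul_div_assoc]
end
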